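/- arXiv:2311.03005 — 8 statements merged into one kernel-verified Lean document; each statement's English description precedes it below -/
import Mathlib

section
/- Let (X, d) be a metric space and π : ℝ≥0 × X → X a continuous semiflow (π(0,x)=x, π(t+s,x)=π(t,π(s,x))). Suppose x ∈ X has precompact positive orbit {π(t,x) : t ≥ 0}, and let τ > 0. If d(π(t+τ,x), π(t,x)) → 0 as t → ∞, then every ω-limit point p of x satisfies π(τ,p) = p. -/
open Filter Topology Metric NNReal

theorem stmt0 {X : Type*} [MetricSpace X] (π : ℝ≥0 × X → X)
    (hcont : Continuous π)
    (h0 : ∀ x : X, π (0, x) = x)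
    (hadd : ∀ (t s : ℝ≥0) (x : X), π (t + s, x) = π (t, π (s, x)))
    (x : X)
    (hpc : IsCompact (closure {y : X | ∃ t : ℝ≥0, π (t, x) = y}))
    (τ : ℝ≥0) (hτ : 0 < τ)
    (hS : Tendsto (fun t : ℝ≥0 => dist (π (t + τ, x)) (π (t, x))) atTop (𝓝 0))
    (p : X)
    (hp : ∃ u : ℕ → ℝ≥0, Tendsto u atTop atTop ∧
      Tendsto (fun n => π (u n, x)) atTop (𝓝 p)) :
    π (τ, p) = p := by
  obtain ⟨u, hu, hlim⟩ := hp
  have h1 : Tendsto (fun n => π (u n + τ, x)) atTop (𝓝 (π (τ, p))) := by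
    have : (fun n => π (u n + τ, x)) = fun n => π (τ, π (u n, x)) := by
      funext n; rw [add_comm, hadd]
    rw [this]
    exact (hcont.comp (Continuous.prodMk_right τ)).continuousAt.tendsto.comp hlim
  have h2 : Tendsto (fun n => dist (π (u n + τ, x)) (π (u n, x))) atTop (𝓝 0) :=
    hS.comp hu
  have h3 : Tendsto (fun n => π (u n + τ, x)) atTop (𝓝 p) := by
    rw [tendsto_iff_dist_tendsto_zero]
    have hle : ∀ n, dist (π (u n + τ, x)) p ≤
        dist (π (u n + τ, x)) (π (u n, x)) + dist (π (u n, x)) p := fun n =>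
      dist_triangle _ _ _
    have h4 : Tendsto (fun n => dist (π (u n + τ, x)) (π (u n, x))
        + dist (π (u n, x)) p) atTop (𝓝 0) := by
      simpa using h2.add ((tendsto_iff_dist_tendsto_zero).mp hlim)
    exact squeeze_zero (fun n => dist_nonneg) hle h4
  exact tendsto_nhds_unique h1 h3
end

section
/- Let (X, d) be a metric space, π : ℝ≥0 × X → X a continuous semiflow, x ∈ X a point with precompact positive orbit, and τ > 0. If every ω-limit point p of x is τ-periodic (i.e., π(τ,p) = p), then d(π(t+τ,x), π(t,x)) → 0 as t → ∞. -/
/-!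
The displacement `y ↦ d(π(τ, y), y)` is continuous and vanishes at every ω-limit point of `x`.
A path that eventually stays in a compact set converges to its set of cluster points, and in a
metric space the cluster points of `t ↦ π(t, x)` at infinity are exactly the ω-limit points, so the
displacement along the orbit tends to `0`.
-/

open Filter Topology Metric NNReal

theorem IsCompact.tendsto_comp_of_mapClusterPt {α X Y : Type*} [TopologicalSpace X]
    [TopologicalSpace Y] {l : Filter α} {f : α → X} {K : Set X} (hK : IsCompact K)
    (hf : ∀ᶠ a in l, f a ∈ K) {g : X → Y} (hg : Continuous g) {y : Y}
    (hy : ∀ p ∈ K, MapClusterPt p l f → g p = y) :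
    Tendsto (g ∘ f) l (𝓝 y) :=
  (hg.tendsto_nhdsSet_nhds fun _ hp => hp).comp (hK.tendsto_nhdsSet_of_mapClusterPt hf hy)

theorem stmt1_general {X : Type*} [MetricSpace X] (π : ℝ≥0 × X → X)
    (hcont : Continuous π)
    (hadd : ∀ (t s : ℝ≥0) (x : X), π (t + s, x) = π (t, π (s, x)))
    (x : X)
    (hpc : IsCompact (closure {y : X | ∃ t : ℝ≥0, π (t, x) = y}))
    (τ : ℝ≥0)
    (hper : ∀ p : X, (∃ u : ℕ → ℝ≥0, Tendsto u atTop atTop ∧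
      Tendsto (fun n => π (u n, x)) atTop (𝓝 p)) → π (τ, p) = p) :
    Tendsto (fun t : ℝ≥0 => dist (π (t + τ, x)) (π (t, x))) atTop (𝓝 0) := by
  have hshift : ∀ t, π (t + τ, x) = π (τ, π (t, x)) := fun t => by rw [add_comm, hadd]
  have hdisp : Continuous fun y => dist (π (τ, y)) y :=
    (hcont.comp (continuous_const.prodMk continuous_id)).dist continuous_id
  simp only [hshift]
  refine hpc.tendsto_comp_of_mapClusterPt (f := fun t => π (t, x))
    (Eventually.of_forall fun t => subset_closure ⟨t, rfl⟩) hdisp fun p _ hp => ?_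
  obtain ⟨u, hup, hu⟩ := hp.exists_seq_tendsto
  simp [hper p ⟨u, hu, hup⟩]

theorem stmt1 {X : Type*} [MetricSpace X] (π : ℝ≥0 × X → X)
    (hcont : Continuous π)
    (h0 : ∀ x : X, π (0, x) = x)
    (hadd : ∀ (t s : ℝ≥0) (x : X), π (t + s, x) = π (t, π (s, x)))
    (x : X)
    (hpc : IsCompact (closure {y : X | ∃ t : ℝ≥0, π (t, x) = y}))
    (τ : ℝ≥0) (hτ : 0 < τ)
    (hper : ∀ p : X, (∃ u : ℕ → ℝ≥0, Tendsto u atTop atTop ∧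
      Tendsto (fun n => π (u n, x)) atTop (𝓝 p)) → π (τ, p) = p) :
    Tendsto (fun t : ℝ≥0 => dist (π (t + τ, x)) (π (t, x))) atTop (𝓝 0) :=
  stmt1_general π hcont hadd x hpc τ hper
end

section
/- Let (X, d) be a metric space and π : ℝ≥0 × X → X a continuous semiflow. Suppose x ∈ X satisfies: (1) there exists τ > 0 with d(π(t+τ,x), π(t,x)) → 0 as t → ∞; (2) x has precompact positive orbit; and (3) there exists a point p with p ∈ ω(p) (positively Poisson stable) such that d(π(t,x), π(t,p)) → 0 as t → ∞. Then x is asymptotically τ-periodic: there exists a τ-periodic point q (π(τ,q)=q) with d(π(t,x), π(t,q)) → 0 as t → ∞. -/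
open Filter Topology Metric NNReal

set_option maxHeartbeats 1000000 in
theorem stmt2 {X : Type*} [MetricSpace X] (π : ℝ≥0 × X → X)
    (hcont : Continuous π)
    (h0 : ∀ x : X, π (0, x) = x)
    (hadd : ∀ (t s : ℝ≥0) (x : X), π (t + s, x) = π (t, π (s, x)))
    (x : X)
    (τ : ℝ≥0) (hτ : 0 < τ)
    (hS : Tendsto (fun t : ℝ≥0 => dist (π (t + τ, x)) (π (t, x))) atTop (𝓝 0))
    (hpc : IsCompact (closure {y : X | ∃ t : ℝ≥0, π (t, x) = y}))
    (p : X)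
    (hPoisson : ∃ u : ℕ → ℝ≥0, Tendsto u atTop atTop ∧
      Tendsto (fun n => π (u n, p)) atTop (𝓝 p))
    (hasymp : Tendsto (fun t : ℝ≥0 => dist (π (t, x)) (π (t, p))) atTop (𝓝 0)) :
    ∃ q : X, π (τ, q) = q ∧
      Tendsto (fun t : ℝ≥0 => dist (π (t, x)) (π (t, q))) atTop (𝓝 0) := by
  obtain ⟨u, hu, hup⟩ := hPoisson
  have hshift : Tendsto (fun t : ℝ≥0 => t + τ) atTop atTop :=
    tendsto_atTop_mono (fun t => le_self_add) tendsto_id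
  -- dist (π (t+τ, p)) (π (t, p)) → 0
  have hp : Tendsto (fun t : ℝ≥0 => dist (π (t + τ, p)) (π (t, p))) atTop (𝓝 0) := by
    have h1 : Tendsto (fun t : ℝ≥0 => dist (π (t + τ, x)) (π (t + τ, p))) atTop (𝓝 0) :=
      hasymp.comp hshift
    have hsum : Tendsto (fun t : ℝ≥0 =>
        dist (π (t + τ, p)) (π (t + τ, x)) + dist (π (t + τ, x)) (π (t, x))
          + dist (π (t, x)) (π (t, p))) atTop (𝓝 0) := by
      have := ((h1.congr (fun t => dist_comm _ _)).add hS).add hasymp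
      simpa using this
    refine squeeze_zero (fun t => dist_nonneg) (fun t => ?_) hsum
    calc dist (π (t + τ, p)) (π (t, p))
        ≤ dist (π (t + τ, p)) (π (t, x)) + dist (π (t, x)) (π (t, p)) := dist_triangle _ _ _
      _ ≤ dist (π (t + τ, p)) (π (t + τ, x)) + dist (π (t + τ, x)) (π (t, x))
            + dist (π (t, x)) (π (t, p)) := by
          gcongr; exact dist_triangle _ _ _
  -- π (τ, p) = p
  have hfix : π (τ, p) = p := by
    have hτp : Tendsto (fun n => π (τ, π (u n, p))) atTop (𝓝 (π (τ, p))) := by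
      have : Tendsto (fun n => ((τ, π (u n, p)) : ℝ≥0 × X)) atTop (𝓝 (τ, p)) :=
        (tendsto_const_nhds).prodMk_nhds hup
      exact (hcont.tendsto _).comp this
    have h2 : Tendsto (fun n => dist (π (u n + τ, p)) (π (u n, p))) atTop (𝓝 0) :=
      hp.comp hu
    have h3 : Tendsto (fun n =>
        dist (π (τ, p)) (π (u n + τ, p)) + dist (π (u n + τ, p)) (π (u n, p))
          + dist (π (u n, p)) p) atTop (𝓝 0) := by
      have hA : Tendsto (fun n => dist (π (τ, p)) (π (u n + τ, p))) atTop (𝓝 0) := by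
        have : Tendsto (fun n => dist (π (τ, p)) (π (τ, π (u n, p)))) atTop (𝓝 0) := by
          simpa [dist_self] using
            (tendsto_const_nhds.dist hτp : Tendsto (fun n => dist (π (τ, p)) (π (τ, π (u n, p))))
              atTop (𝓝 (dist (π (τ, p)) (π (τ, p)))))
        simpa only [hadd τ (u _) p, add_comm] using this
      have hC : Tendsto (fun n => dist (π (u n, p)) p) atTop (𝓝 0) :=
        tendsto_iff_dist_tendsto_zero.mp hup
      simpa using (hA.add h2).add hC
    have hle : dist (π (τ, p)) p ≤ 0 := by
      refine ge_of_tendsto h3 (Eventually.of_forall fun n => ?_)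
      calc dist (π (τ, p)) p
          ≤ dist (π (τ, p)) (π (u n + τ, p)) + dist (π (u n + τ, p)) p := dist_triangle _ _ _
        _ ≤ dist (π (τ, p)) (π (u n + τ, p)) + (dist (π (u n + τ, p)) (π (u n, p))
              + dist (π (u n, p)) p) := by gcongr; exact dist_triangle _ _ _
        _ = _ := by ring
    exact dist_le_zero.mp hle
  exact ⟨p, hfix, hasymp⟩
end

section
/- Define φ(t) = sin(√(π² + t)) for t ≥ 0. Then φ is not asymptotically τ-periodic for any τ > 0; that is, there is no continuous function p : ℝ≥0 → ℝ with p(t+τ) = p(t) for all t and |φ(t) − p(t)| → 0 as t → ∞. -/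
open Filter Topology Real

lemma half_le_sin {x : ℝ} (h1 : π/6 ≤ x) (h2 : x ≤ 5*π/6) : 1/2 ≤ Real.sin x := by
  have hpi := Real.pi_pos
  have key : ∀ y : ℝ, π/6 ≤ y → y ≤ π/2 → 1/2 ≤ Real.sin y := by
    intro y hy1 hy2
    calc (1:ℝ)/2 = Real.sin (π/6) := Real.sin_pi_div_six.symm
      _ ≤ Real.sin y := by
          apply Real.strictMonoOn_sin.monotoneOn ⟨by linarith, by linarith⟩
            ⟨by linarith, by linarith⟩ hy1
  rcases le_total x (π/2) with h | h
  · exact key x h1 h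
  · rw [← Real.sin_pi_sub]
    exact key (π - x) (by linarith) (by linarith)

lemma aux_sqrt (n : ℕ) (r u : ℝ)
    (h1 : (2*π*n + r + π/6)^2 - π^2 ≤ u)
    (h2 : u ≤ (2*π*n + r + 5*π/6)^2 - π^2) (hr : 0 ≤ r) :
    ∃ x : ℝ, Real.sqrt (π^2 + u) = x + ((n:ℤ):ℝ) * (2*π) ∧ r + π/6 ≤ x ∧ x ≤ r + 5*π/6 := by
  have hpi := Real.pi_pos
  have hn0 : (0:ℝ) ≤ (n:ℝ) := Nat.cast_nonneg n
  have hc : 0 ≤ 2*π*n + r + π/6 := by positivity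
  have hd : 0 ≤ 2*π*n + r + 5*π/6 := by positivity
  have l1 : 2*π*n + r + π/6 ≤ Real.sqrt (π^2+u) := by
    rw [← Real.sqrt_sq hc]
    exact Real.sqrt_le_sqrt (by linarith)
  have l2 : Real.sqrt (π^2+u) ≤ 2*π*n + r + 5*π/6 := by
    rw [← Real.sqrt_sq hd]
    exact Real.sqrt_le_sqrt (by linarith)
  exact ⟨Real.sqrt (π^2+u) - 2*π*n, by push_cast; ring, by linarith, by linarith⟩

lemma phi_ge (n : ℕ) (u : ℝ)
    (h1 : (2*π*n + 0 + π/6)^2 - π^2 ≤ u)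
    (h2 : u ≤ (2*π*n + 0 + 5*π/6)^2 - π^2) :
    1/2 ≤ Real.sin (Real.sqrt (π^2 + u)) := by
  obtain ⟨x, hx, hx1, hx2⟩ := aux_sqrt n 0 u h1 h2 le_rfl
  rw [hx, Real.sin_add_int_mul_two_pi]
  exact half_le_sin (by linarith) (by linarith)

lemma phi_le (n : ℕ) (u : ℝ)
    (h1 : (2*π*n + π + π/6)^2 - π^2 ≤ u)
    (h2 : u ≤ (2*π*n + π + 5*π/6)^2 - π^2) :
    Real.sin (Real.sqrt (π^2 + u)) ≤ -(1/2) := by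
  have hpi := Real.pi_pos
  obtain ⟨x, hx, hx1, hx2⟩ := aux_sqrt n π u h1 h2 hpi.le
  rw [hx, Real.sin_add_int_mul_two_pi]
  have h := half_le_sin (x := x - π) (by linarith) (by linarith)
  rw [Real.sin_sub_pi] at h
  linarith

lemma choose_n (M τ : ℝ) (hτ : 0 < τ) :
    ∃ n : ℕ, ∀ r : ℝ, 0 ≤ r → r ≤ π →
      M ≤ (2*π*n + r + π/6)^2 - π^2 ∧
      (2*π*n + r + π/6)^2 - π^2 + τ ≤ (2*π*n + r + 5*π/6)^2 - π^2 := by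
  obtain ⟨n, hn⟩ := exists_nat_ge (max (max M τ) 0 + 1)
  have hM : M ≤ (n:ℝ) - 1 := by
    have := le_max_left M τ; have := le_max_left (max M τ) 0; linarith
  have hτn : τ ≤ (n:ℝ) := by
    have := le_max_right M τ; have := le_max_left (max M τ) 0; linarith
  have h1n : (1:ℝ) ≤ (n:ℝ) := by
    have := le_max_right (max M τ) 0; linarith
  have hpi3 := Real.pi_gt_three
  have hpi4 := Real.pi_le_four
  refine ⟨n, fun r hr hrπ => ⟨?_, ?_⟩⟩
  · nlinarith [sq_nonneg ((n:ℝ) - 1), sq_nonneg (π - 3), mul_nonneg hr (Nat.cast_nonneg n)]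
  · have hpn : 3*(n:ℝ) ≤ π*(n:ℝ) :=
      mul_le_mul_of_nonneg_right hpi3.le (Nat.cast_nonneg n)
    have hp2n : 9*(n:ℝ) ≤ π^2*(n:ℝ) := by nlinarith
    nlinarith [mul_nonneg hr Real.pi_pos.le, sq_nonneg π]

theorem stmt7 (φ : ℝ → ℝ) (hφ : ∀ t, φ t = Real.sin (Real.sqrt (π ^ 2 + t)))
    (τ : ℝ) (hτ : 0 < τ) :
    ¬ ∃ p : ℝ → ℝ, Continuous p ∧ (∀ t, p (t + τ) = p t) ∧
      Tendsto (fun t => |φ t - p t|) atTop (𝓝 0) := by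
  rintro ⟨p, _hc, hper, hlim⟩
  have hP : Function.Periodic p τ := hper
  have hev := hlim.eventually_lt_const (show (0:ℝ) < 1/4 by norm_num)
  rw [eventually_atTop] at hev
  obtain ⟨T, hT⟩ := hev
  obtain ⟨n, hn⟩ := choose_n (max T 0) τ hτ
  obtain ⟨hA1, hA2⟩ := hn 0 le_rfl Real.pi_pos.le
  obtain ⟨hB1, hB2⟩ := hn π Real.pi_pos.le le_rfl
  obtain ⟨a, ha⟩ : ∃ a : ℝ, a = (2*π*n + 0 + π/6)^2 - π^2 := ⟨_, rfl⟩
  obtain ⟨b, hb⟩ : ∃ b : ℝ, b = (2*π*n + π + π/6)^2 - π^2 := ⟨_, rfl⟩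
  rw [← ha] at hA1 hA2
  rw [← hb] at hB1 hB2
  obtain ⟨y, hy⟩ : ∃ y : ℝ, y = a + (⌈(b - a)/τ⌉ : ℝ) * τ := ⟨_, rfl⟩
  have hky1 : b ≤ y := by
    have h := Int.le_ceil ((b - a)/τ)
    rw [div_le_iff₀ hτ] at h
    rw [hy]; linarith
  have hky2 : y ≤ b + τ := by
    have h := Int.ceil_lt_add_one ((b - a)/τ)
    have h2 : (⌈(b - a)/τ⌉ : ℝ) * τ ≤ ((b - a)/τ + 1) * τ :=
      mul_le_mul_of_nonneg_right (by linarith) hτ.le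
    rw [add_mul, div_mul_cancel₀ _ hτ.ne'] at h2
    rw [hy]; linarith
  have hpy : p y = p a := by rw [hy]; exact (hP.int_mul ⌈(b - a)/τ⌉) a
  have hφa : 1/2 ≤ φ a := by
    rw [hφ a]
    exact phi_ge n a ha.ge (by linarith)
  have hφy : φ y ≤ -(1/2) := by
    rw [hφ y]
    exact phi_le n y (hb ▸ hky1) (by linarith)
  have hTa : T ≤ a := le_trans (le_max_left T 0) hA1
  have hTy : T ≤ y := le_trans (le_trans (le_max_left T 0) hB1) hky1
  have h1 := abs_lt.mp (hT a hTa)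
  have h2 := abs_lt.mp (hT y hTy)
  rw [hpy] at h2
  linarith [h1.1, h1.2, h2.1, h2.2]
end

section
/- Let (X, ρ) be a complete metric space, let d be the Bebutov metric on C(ℝ≥0, X), let φ ∈ C(ℝ≥0, X), and τ > 0. Then lim_{t→∞} ρ(φ(t+τ), φ(t)) = 0 if and only if lim_{t→∞} d(φ^{t+τ}, φ^t) = 0, where φ^h(s) := φ(s+h). -/
/-! The Bebutov distance between the translates `φ^{t+τ}` and `φ^t` is bounded above by
`sup_{s ≥ t} ρ(φ(s+τ), φ(s))`, since every window `[0, L]` only sees times `s + t ≥ t`, and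
below by `min(ρ(φ(t+τ), φ(t)), 1)`, the contribution of the window `L = 1` at time `0`. -/

open Filter Topology Set

namespace Bebutov

variable {X : Type*} [MetricSpace X]

noncomputable def bebutovDist (f g : ℝ → X) : ℝ :=
  ⨆ L : Ioi (0:ℝ), min (sSup ((fun t => dist (f t) (g t)) '' Icc (0:ℝ) (L:ℝ))) (1 / (L:ℝ))

theorem bebutovDist_nonneg (f g : ℝ → X) : 0 ≤ bebutovDist f g :=
  Real.iSup_nonneg fun L =>
    le_min (Real.sSup_nonneg (by rintro _ ⟨s, -, rfl⟩; exact dist_nonneg))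
      (one_div_pos.2 L.2).le

theorem bebutovDist_le_of_forall_dist_le {f g : ℝ → X} {ε : ℝ}
    (h : ∀ s, 0 ≤ s → dist (f s) (g s) ≤ ε) : bebutovDist f g ≤ ε :=
  ciSup_le fun L => (min_le_left _ _).trans <|
    csSup_le ((nonempty_Icc.2 L.2.le).image _) (by rintro _ ⟨s, hs, rfl⟩; exact h s hs.1)

/-- Continuity is what makes the windows' `sSup` the true suprema (an unbounded set of reals has
`sSup = 0`) and the family indexed by `L` bounded above. -/
theorem min_dist_one_le_bebutovDist {f g : ℝ → X} (hf : ContinuousOn f (Ici 0))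
    (hg : ContinuousOn g (Ici 0)) : min (dist (f 0) (g 0)) 1 ≤ bebutovDist f g := by
  set D : ℝ → ℝ := fun t => dist (f t) (g t)
  have hbdd : ∀ L, BddAbove (D '' Icc 0 L) := fun L =>
    (isCompact_Icc.image_of_continuousOn
      ((continuous_dist.comp_continuousOn (hf.prodMk hg)).mono Icc_subset_Ici_self)).bddAbove
  obtain ⟨C, hC⟩ := hbdd 1
  have hrange : BddAbove (range fun L : Ioi (0:ℝ) => min (sSup (D '' Icc 0 L)) (1 / (L:ℝ))) := by
    refine ⟨max C 1, ?_⟩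
    rintro _ ⟨⟨L, hL⟩, rfl⟩
    rcases le_total L 1 with hL1 | hL1
    · refine le_max_of_le_left <| (min_le_left _ _).trans <|
        csSup_le ((nonempty_Icc.2 (le_of_lt hL)).image _) fun x hx => hC ?_
      exact image_mono (Icc_subset_Icc_right hL1) hx
    · exact le_max_of_le_right <| (min_le_right _ _).trans <|
        (div_le_one (one_pos.trans_le hL1)).2 hL1
  calc min (dist (f 0) (g 0)) 1
      ≤ min (sSup (D '' Icc 0 1)) (1 / 1) := by
        rw [div_one]
        exact min_le_min_right _ (le_csSup (hbdd 1) ⟨0, left_mem_Icc.2 zero_le_one, rfl⟩)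
    _ ≤ bebutovDist f g := le_ciSup hrange (⟨1, mem_Ioi.2 one_pos⟩ : Ioi (0:ℝ))

theorem tendsto_bebutovDist_zero {ι : Type*} {l : Filter ι} {f g : ι → ℝ → X}
    (h : ∀ ε > 0, ∀ᶠ i in l, ∀ s, 0 ≤ s → dist (f i s) (g i s) ≤ ε) :
    Tendsto (fun i => bebutovDist (f i) (g i)) l (𝓝 0) :=
  tendsto_order.2
    ⟨fun _ ha => Eventually.of_forall fun _ => ha.trans_le (bebutovDist_nonneg _ _),
     fun _ ha => (h _ (half_pos ha)).mono fun _ hi =>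
       (bebutovDist_le_of_forall_dist_le hi).trans_lt (half_lt_self ha)⟩

end Bebutov

open Bebutov

theorem stmt10_general {X : Type*} [MetricSpace X]
    (d : (ℝ → X) → (ℝ → X) → ℝ)
    (hd : ∀ f g : ℝ → X, d f g =
      ⨆ L : Ioi (0:ℝ), min (sSup ((fun t => dist (f t) (g t)) '' Icc (0:ℝ) (L:ℝ))) (1 / (L:ℝ)))
    (φ : ℝ → X) (hφ : ContinuousOn φ (Ici 0))
    (τ : ℝ) :
    Tendsto (fun t => dist (φ (t + τ)) (φ t)) atTop (𝓝 0) ↔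
      Tendsto (fun t => d (fun s => φ (s + (t + τ))) (fun s => φ (s + t))) atTop (𝓝 0) := by
  obtain rfl : d = bebutovDist := funext₂ hd
  have hshift : ∀ a, 0 ≤ a → ContinuousOn (fun s => φ (s + a)) (Ici 0) := fun a ha =>
    hφ.comp (continuous_add_const a).continuousOn fun s hs => add_nonneg hs ha
  constructor
  · refine fun h => tendsto_bebutovDist_zero fun ε hε => ?_
    filter_upwards [eventually_forall_ge_atTop.2 (h.eventually (Iic_mem_nhds hε))] with t ht s hs
    simpa only [← add_assoc] using ht (s + t) (le_add_of_nonneg_left hs)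
  · intro h
    have hmin : Tendsto (fun t => min (dist (φ (t + τ)) (φ t)) 1) atTop (𝓝 0) := by
      refine tendsto_of_tendsto_of_tendsto_of_le_of_le' tendsto_const_nhds h
        (Eventually.of_forall fun _ => le_min dist_nonneg zero_le_one) ?_
      filter_upwards [eventually_ge_atTop 0, eventually_ge_atTop (-τ)] with t ht htτ
      simpa only [zero_add] using
        min_dist_one_le_bebutovDist (hshift _ (neg_le_iff_add_nonneg.1 htτ)) (hshift t ht)
    refine hmin.congr' ?_
    filter_upwards [hmin.eventually (gt_mem_nhds one_pos)] with t ht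
    exact min_eq_left (min_lt_iff.1 ht |>.resolve_right (lt_irrefl 1)).le

theorem stmt10 {X : Type*} [MetricSpace X] [CompleteSpace X]
    (d : (ℝ → X) → (ℝ → X) → ℝ)
    (hd : ∀ f g : ℝ → X, d f g =
      ⨆ L : Ioi (0:ℝ), min (sSup ((fun t => dist (f t) (g t)) '' Icc (0:ℝ) (L:ℝ))) (1 / (L:ℝ)))
    (φ : ℝ → X) (hφ : ContinuousOn φ (Ici 0))
    (τ : ℝ) (hτ : 0 < τ) :
    Tendsto (fun t => dist (φ (t + τ)) (φ t)) atTop (𝓝 0) ↔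
      Tendsto (fun t => d (fun s => φ (s + (t + τ))) (fun s => φ (s + t))) atTop (𝓝 0) :=
  stmt10_general d hd φ hφ τ
end

section
/- Let φ : ℝ≥0 → X be continuous into a complete metric space, positively Lagrange stable in the Bebutov shift dynamical system (i.e., {φ^h : h ≥ 0} is precompact in C(ℝ≥0, X) with the compact-open topology), and τ > 0. Then φ is S-asymptotically τ-periodic (ρ(φ(t+τ), φ(t)) → 0) if and only if every function ψ in the ω-limit set of φ under the shift flow is τ-periodic (ψ(t+τ) = ψ(t) for all t). -/
open Filter Topology Set NNReal

/-!
The defect `ψ ↦ dist (ψ (t + τ)) (ψ t)` is continuous for the compact-open topology, and on the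
shift `φ^h` it equals the defect of `φ` at `t + h`. So if the defect of `φ` tends to `0`, it
vanishes at every ω-limit point by uniqueness of limits; conversely, if it stays `≥ ε` along
`tₙ → ∞`, precompactness of the orbit gives an ω-limit point with defect `≥ ε` at `0`.
-/

section SequentialOmegaLimit

variable {ι Y Z : Type*} [TopologicalSpace Y] [TopologicalSpace Z] {l : Filter ι}
  {γ : ι → Y} {Φ : Y → Z} {z : Z}

theorem eq_of_tendsto_comp_of_seq_tendsto [T2Space Z] (hΦ : Continuous Φ)
    (h : Tendsto (Φ ∘ γ) l (𝓝 z)) {u : ℕ → ι} (hu : Tendsto u atTop l) {ψ : Y}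
    (hψ : Tendsto (γ ∘ u) atTop (𝓝 ψ)) : Φ ψ = z :=
  tendsto_nhds_unique ((hΦ.tendsto ψ).comp hψ) (h.comp hu)

theorem tendsto_comp_of_forall_seq_tendsto_eq [l.IsCountablyGenerated]
    (hγ : IsSeqCompact (closure (range γ))) (hΦ : Continuous Φ)
    (hω : ∀ ψ, (∃ u : ℕ → ι, Tendsto u atTop l ∧ Tendsto (γ ∘ u) atTop (𝓝 ψ)) → Φ ψ = z) :
    Tendsto (Φ ∘ γ) l (𝓝 z) := by
  refine tendsto_nhds.2 fun U hU hzU => ?_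
  by_contra hU'
  obtain ⟨t, ht, htU⟩ := exists_seq_forall_of_frequently (not_eventually.1 hU')
  obtain ⟨ψ, -, g, hg, hlim⟩ := hγ fun n => subset_closure (mem_range_self (t n))
  have hψ : Φ ψ = z := hω ψ ⟨t ∘ g, ht.comp hg.tendsto_atTop, hlim⟩
  have hψU : Φ ψ ∈ Uᶜ := hU.isClosed_compl.mem_of_tendsto ((hΦ.tendsto ψ).comp hlim)
    (Eventually.of_forall fun n => htU (g n))
  exact hψU (hψ ▸ hzU)

end SequentialOmegaLimit

theorem stmt11_general {X : Type*} [MetricSpace X]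
    (φ : C(ℝ≥0, X))
    (σ : ℝ≥0 → C(ℝ≥0, X) → C(ℝ≥0, X))
    (hσ : ∀ (h : ℝ≥0) (ψ : C(ℝ≥0, X)) (t : ℝ≥0), σ h ψ t = ψ (t + h))
    (hLagrange : IsCompact (closure (Set.range fun h : ℝ≥0 => σ h φ)))
    (τ : ℝ≥0) :
    Tendsto (fun t : ℝ≥0 => dist (φ (t + τ)) (φ t)) atTop (𝓝 0) ↔
      ∀ ψ : C(ℝ≥0, X),
        (∃ u : ℕ → ℝ≥0, Tendsto u atTop atTop ∧
          Tendsto (fun n => σ (u n) φ) atTop (𝓝 ψ)) →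
        ∀ t : ℝ≥0, ψ (t + τ) = ψ t := by
  constructor
  · rintro hp ψ ⟨u, hu, hψ⟩ t
    refine dist_eq_zero.1 (eq_of_tendsto_comp_of_seq_tendsto (γ := fun h => σ h φ)
      (Φ := fun ψ => dist (ψ (t + τ)) (ψ t)) (by fun_prop) ?_ hu hψ)
    simpa only [Function.comp_def, id_eq, hσ, add_right_comm t τ] using
      hp.comp (tendsto_atTop_mono (fun _ => le_add_self) tendsto_id)
  · intro hω
    have hdefect := tendsto_comp_of_forall_seq_tendsto_eq (γ := fun h => σ h φ)
      (Φ := fun ψ => dist (ψ τ) (ψ 0)) hLagrange.isSeqCompact (by fun_prop)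
      (z := 0) fun ψ hψ => dist_eq_zero.2 (by simpa using hω ψ hψ 0)
    simpa only [Function.comp_def, hσ, zero_add, add_comm τ] using hdefect

theorem stmt11 {X : Type*} [MetricSpace X] [CompleteSpace X]
    (φ : C(ℝ≥0, X))
    (σ : ℝ≥0 → C(ℝ≥0, X) → C(ℝ≥0, X))
    (hσ : ∀ (h : ℝ≥0) (ψ : C(ℝ≥0, X)) (t : ℝ≥0), σ h ψ t = ψ (t + h))
    (hLagrange : IsCompact (closure (Set.range fun h : ℝ≥0 => σ h φ)))
    (τ : ℝ≥0) (hτ : 0 < τ) :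
    Tendsto (fun t : ℝ≥0 => dist (φ (t + τ)) (φ t)) atTop (𝓝 0) ↔
      ∀ ψ : C(ℝ≥0, X),
        (∃ u : ℕ → ℝ≥0, Tendsto u atTop atTop ∧
          Tendsto (fun n => σ (u n) φ) atTop (𝓝 ψ)) →
        ∀ t : ℝ≥0, ψ (t + τ) = ψ t :=
  stmt11_general φ σ hσ hLagrange τ
end

section
/- Let P : [a, b] → [a, b] be a continuous strictly increasing map of a compact interval, and let x ∈ [a, b] be a point such that the sequence P^k(x) is strictly decreasing (in particular x is not a fixed point). Then x is not chain recurrent for P: there exist ε > 0 and m ∈ ℕ such that there is no (ε, m)-chain from x to itself. -/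
open Filter Topology Set

theorem stmt14 (a b : ℝ) (hab : a ≤ b) (P : ℝ → ℝ)
    (hmaps : MapsTo P (Icc a b) (Icc a b))
    (hcont : ContinuousOn P (Icc a b))
    (hmono : StrictMonoOn P (Icc a b))
    (x : ℝ) (hx : x ∈ Icc a b)
    (hdec : StrictAnti fun k : ℕ => P^[k] x) :
    ∃ ε > (0:ℝ), ∃ m : ℕ,
      ¬ ∃ (n : ℕ) (c : ℕ → ℝ) (ms : ℕ → ℕ),
        0 < n ∧ c 0 = x ∧ c n = x ∧ (∀ i ≤ n, c i ∈ Icc a b) ∧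
        (∀ i < n, m ≤ ms i ∧ |P^[ms i] (c i) - c (i + 1)| < ε) := by
  -- the orbit stays in [a,b]
  have horb : ∀ k, P^[k] x ∈ Icc a b := by
    intro k
    induction k with
    | zero => simpa using hx
    | succ j ih => rw [Function.iterate_succ_apply']; exact hmaps ih
  set L : ℝ := ⨅ k : ℕ, P^[k] x with hL
  have hbdd : BddBelow (Set.range fun k : ℕ => P^[k] x) := by
    refine ⟨a, ?_⟩
    rintro y ⟨k, rfl⟩
    exact (horb k).1
  have hLa : a ≤ L := le_ciInf fun k => (horb k).1
  have hLle : ∀ k, L ≤ P^[k] x := fun k => ciInf_le hbdd k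
  have hP1 : P^[1] x < x := by
    have := hdec (show (0:ℕ) < 1 by norm_num)
    simpa using this
  have hLx : L < x := lt_of_le_of_lt (hLle 1) hP1
  -- on (L, x] the map moves points strictly down
  have hPy : ∀ y, L < y → y ≤ x → y ∈ Icc a b → P y < y := by
    intro y hLy hyx hymem
    by_contra h
    push_neg at h
    have hall : ∀ k, y ≤ P^[k] x := by
      intro k
      induction k with
      | zero => simpa using hyx
      | succ j ih =>
        rw [Function.iterate_succ_apply']
        calc y ≤ P y := h
          _ ≤ P (P^[j] x) := hmono.monotoneOn hymem (horb j) ih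
    have : y ≤ L := le_ciInf hall
    exact absurd hLy (not_lt.mpr this)
  set u : ℝ := (L + x) / 2 with hu
  have hLu : L < u := by simp only [hu]; linarith
  have hux : u ≤ x := by simp only [hu]; linarith
  have hau : a ≤ u := le_trans hLa hLu.le
  have hsub : Icc u x ⊆ Icc a b := Icc_subset_Icc hau hx.2
  -- minimum of y - P y on [u,x]
  have hcont' : ContinuousOn (fun y => y - P y) (Icc u x) :=
    continuousOn_id.sub (hcont.mono hsub)
  obtain ⟨y₀, hy₀mem, hy₀min⟩ :=
    isCompact_Icc.exists_isMinOn (Set.nonempty_Icc.mpr hux) hcont'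
  set δ₀ : ℝ := y₀ - P y₀ with hδ₀
  have hδ₀pos : 0 < δ₀ := by
    have := hPy y₀ (lt_of_lt_of_le hLu hy₀mem.1) hy₀mem.2 (hsub hy₀mem)
    simp only [hδ₀]; linarith
  set ε : ℝ := min δ₀ ((x - L) / 4) with hε
  have hεpos : 0 < ε := lt_min hδ₀pos (by linarith)
  have hεδ : ε ≤ δ₀ := min_le_left _ _
  have hεL : ε ≤ (x - L) / 4 := min_le_right _ _
  have hxεmem : x - ε ∈ Icc u x := by
    constructor
    · simp only [hu]; linarith
    · linarith
  -- one step invariance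
  have hstep : ∀ y, y ∈ Icc a b → y ≤ x - ε → P y ∈ Icc a b ∧ P y ≤ x - 2 * ε := by
    intro y hymem hyle
    refine ⟨hmaps hymem, ?_⟩
    have h1 : P y ≤ P (x - ε) := hmono.monotoneOn hymem (hsub hxεmem) hyle
    have h2 : δ₀ ≤ (x - ε) - P (x - ε) := hy₀min hxεmem
    linarith
  -- iterated invariance
  have hkeep : ∀ y, y ∈ Icc a b → y ≤ x - ε → ∀ k, P^[k] y ∈ Icc a b ∧ P^[k] y ≤ x - ε := by
    intro y hymem hyle k
    induction k with
    | zero => exact ⟨by simpa using hymem, by simpa using hyle⟩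
    | succ j ih =>
      rw [Function.iterate_succ_apply']
      obtain ⟨h1, h2⟩ := hstep _ ih.1 ih.2
      exact ⟨h1, by linarith⟩
  have hiter : ∀ y, y ∈ Icc a b → y ≤ x - ε → ∀ k, 1 ≤ k → P^[k] y ≤ x - 2 * ε := by
    intro y hymem hyle k hk
    obtain ⟨j, rfl⟩ := Nat.exists_eq_add_of_le hk
    rw [add_comm, Function.iterate_succ_apply']
    exact (hstep _ (hkeep y hymem hyle j).1 (hkeep y hymem hyle j).2).2
  -- find m with P^[m] x < x - 2ε
  have hLlt : L < x - 2 * ε := by linarith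
  have hexm : ∃ m : ℕ, P^[m] x < x - 2 * ε := by
    by_contra h
    push_neg at h
    have : x - 2 * ε ≤ L := le_ciInf h
    linarith
  obtain ⟨m, hm⟩ := hexm
  have hm1 : 1 ≤ m := by
    rcases Nat.eq_zero_or_pos m with h0 | h1
    · exfalso; rw [h0] at hm; simp at hm; linarith
    · exact h1
  have hmall : ∀ k, m ≤ k → P^[k] x < x - 2 * ε :=
    fun k hk => lt_of_le_of_lt (hdec.antitone hk) hm
  refine ⟨ε, hεpos, m, ?_⟩
  rintro ⟨n, c, ms, hn, hc0, hcn, hmem, hchain⟩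
  have hclaim : ∀ i, 1 ≤ i → i ≤ n → c i ≤ x - ε := by
    intro i
    induction i with
    | zero => intro h; omega
    | succ j ih =>
      intro _ hjn
      obtain ⟨hms, habs⟩ := hchain j (by omega)
      have habs' : P^[ms j] (c j) - c (j + 1) > -ε := by
        have := abs_lt.mp habs
        linarith [this.1]
      rcases Nat.eq_zero_or_pos j with h0 | h1
      · subst h0
        have : P^[ms 0] (c 0) < x - 2 * ε := by
          rw [hc0]; exact hmall _ hms
        linarith
      · have hcj : c j ≤ x - ε := ih h1 (by omega)
        have hcjmem : c j ∈ Icc a b := hmem j (by omega)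
        have : P^[ms j] (c j) ≤ x - 2 * ε :=
          hiter (c j) hcjmem hcj (ms j) (le_trans hm1 hms)
        linarith
  have := hclaim n hn (le_refl n)
  rw [hcn] at this
  linarith
end

section
/- Define A(k) := ∫_k^{k+1} cos(√(π²+s))/(2√(π²+s)) ds = sin(√(π²+k+1)) − sin(√(π²+k)) for k ∈ ℤ≥0. Then A(k) → 0 as k → ∞, the partial sums φ(k) = Σ_{j=0}^{k−1} A(j) = sin(√(π²+k)) satisfy |φ(k)| ≤ 1, and the set of limit points of the sequence (sin(√(π²+k)))_{k ∈ ℤ≥0} contains at least two distinct real numbers. -/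
open Filter Topology Real

private lemma sin_lip (a b : ℝ) : |Real.sin a - Real.sin b| ≤ |a - b| := by
  rw [Real.sin_sub_sin]
  have h1 := Real.abs_sin_le_abs (x := (a - b) / 2)
  have h2 := Real.abs_cos_le_one ((a + b) / 2)
  have h3 : |(a - b) / 2| = |a - b| / 2 := by
    rw [abs_div]; norm_num
  rw [h3] at h1
  rw [abs_mul, abs_mul, abs_two]
  calc 2 * |Real.sin ((a - b) / 2)| * |Real.cos ((a + b) / 2)|
      ≤ 2 * (|a - b| / 2) * 1 := by
        apply mul_le_mul _ h2 (abs_nonneg _) (by positivity)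
        apply mul_le_mul_of_nonneg_left h1 (by norm_num)
    _ = |a - b| := by ring

private lemma sqrt_tendsto : Tendsto Real.sqrt atTop atTop := by
  rw [tendsto_atTop_atTop]
  intro b
  refine ⟨max 0 b ^ 2, fun a ha => ?_⟩
  calc b ≤ max 0 b := le_max_right _ _
    _ = Real.sqrt (max 0 b ^ 2) := (Real.sqrt_sq (le_max_left _ _)).symm
    _ ≤ Real.sqrt a := Real.sqrt_le_sqrt ha

private lemma key_sub (t : ℝ) (ht : 0 < t) :
    ∃ u : ℕ → ℕ, Tendsto u atTop atTop ∧
      Tendsto (fun n => Real.sin (Real.sqrt (π ^ 2 + (u n : ℝ)))) atTop (𝓝 (Real.sin t)) := by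
  set e : ℕ → ℝ := fun n => t + (n + 1 : ℕ) * (2 * π) with he
  have hπ : (0:ℝ) < π := Real.pi_pos
  have hEb : ∀ n : ℕ, 2 * π * ((n:ℝ) + 1) ≤ e n := by
    intro n
    rw [he]
    push_cast
    nlinarith
  have hepos : ∀ n, 2 * π ≤ e n := by
    intro n
    have h := hEb n
    have : (2:ℝ) * π ≤ 2 * π * ((n:ℝ) + 1) := by
      nlinarith [Nat.cast_nonneg (α := ℝ) n]
    linarith
  have hcnonneg : ∀ n, 0 ≤ e n ^ 2 - π ^ 2 := by
    intro n
    have := hepos n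
    nlinarith
  refine ⟨fun n => ⌊e n ^ 2 - π ^ 2⌋₊, ?_, ?_⟩
  · apply tendsto_nat_floor_atTop.comp
    apply tendsto_atTop_mono (f := fun n : ℕ => (n : ℝ))
    · intro n
      have h1 := hEb n
      have h4 : (3:ℝ) ≤ π := by linarith [Real.pi_gt_three]
      have hn : (0:ℝ) ≤ n := Nat.cast_nonneg n
      have h5 : (0:ℝ) ≤ 2 * π * ((n:ℝ) + 1) := by positivity
      have h6 : (2 * π * ((n:ℝ) + 1)) ^ 2 ≤ e n ^ 2 := by nlinarith
      nlinarith [sq_nonneg ((n:ℝ))]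
    · exact tendsto_natCast_atTop_atTop
  · rw [tendsto_iff_dist_tendsto_zero]
    apply squeeze_zero (g := fun n : ℕ => 1 / (2 * π) * (1 / ((n:ℝ) + 1))) (fun n => dist_nonneg)
    · intro n
      simp only
      set x := Real.sqrt (π ^ 2 + (⌊e n ^ 2 - π ^ 2⌋₊ : ℝ)) with hx
      have hxe : x ≤ e n := by
        rw [hx]
        have h1 : π ^ 2 + (⌊e n ^ 2 - π ^ 2⌋₊ : ℝ) ≤ e n ^ 2 := by
          have := Nat.floor_le (hcnonneg n)
          linarith
        calc Real.sqrt (π ^ 2 + (⌊e n ^ 2 - π ^ 2⌋₊ : ℝ)) ≤ Real.sqrt (e n ^ 2) :=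
              Real.sqrt_le_sqrt h1
          _ = e n := by rw [Real.sqrt_sq (by linarith [hepos n])]
      have hxnn : 0 ≤ x := Real.sqrt_nonneg _
      have hxsq : x ^ 2 = π ^ 2 + (⌊e n ^ 2 - π ^ 2⌋₊ : ℝ) := by
        rw [hx, Real.sq_sqrt]
        positivity
      have hfl : e n ^ 2 - π ^ 2 - 1 < (⌊e n ^ 2 - π ^ 2⌋₊ : ℝ) :=
        Nat.sub_one_lt_floor _
      have hE : 0 < e n := lt_of_lt_of_le (by positivity) (hepos n)
      have hgap : e n - x ≤ 1 / e n := by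
        rw [le_div_iff₀ hE]
        nlinarith
      have hsin : Real.sin (e n) = Real.sin t := by
        rw [he]; exact Real.sin_add_nat_mul_two_pi t (n + 1)
      have hlip : dist (Real.sin x) (Real.sin t) ≤ |x - e n| := by
        rw [← hsin, Real.dist_eq]
        exact sin_lip x (e n)
      have habs : |x - e n| ≤ 1 / e n := by
        rw [abs_sub_comm, abs_of_nonneg (by linarith)]
        exact hgap
      have h2pin : (0:ℝ) < 2 * π * ((n:ℝ) + 1) := by positivity
      have hle : 1 / e n ≤ 1 / (2 * π * ((n:ℝ) + 1)) :=
        one_div_le_one_div_of_le h2pin (hEb n)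
      calc dist (Real.sin x) (Real.sin t) ≤ 1 / e n := le_trans hlip habs
        _ ≤ 1 / (2 * π * ((n:ℝ) + 1)) := hle
        _ = 1 / (2 * π) * (1 / ((n:ℝ) + 1)) := by rw [one_div_mul_one_div]
    · rw [show (0:ℝ) = 1 / (2 * π) * 0 by ring]
      exact tendsto_const_nhds.mul tendsto_one_div_add_atTop_nhds_zero_nat

theorem stmt19 (A : ℕ → ℝ)
    (hA : ∀ k : ℕ, A k =
      Real.sin (Real.sqrt (π ^ 2 + (k + 1 : ℝ))) - Real.sin (Real.sqrt (π ^ 2 + (k : ℝ)))) :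
    (∀ k : ℕ, (∫ s in (k : ℝ)..(k + 1 : ℝ),
        Real.cos (Real.sqrt (π ^ 2 + s)) / (2 * Real.sqrt (π ^ 2 + s))) = A k) ∧
    Tendsto A atTop (𝓝 0) ∧
    (∀ k : ℕ, ∑ j ∈ Finset.range k, A j = Real.sin (Real.sqrt (π ^ 2 + (k : ℝ)))) ∧
    (∀ k : ℕ, |Real.sin (Real.sqrt (π ^ 2 + (k : ℝ)))| ≤ 1) ∧
    (∃ x y : ℝ, x ≠ y ∧
      (∃ u : ℕ → ℕ, Tendsto u atTop atTop ∧
        Tendsto (fun n => Real.sin (Real.sqrt (π ^ 2 + (u n : ℝ)))) atTop (𝓝 x)) ∧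
      (∃ v : ℕ → ℕ, Tendsto v atTop atTop ∧
        Tendsto (fun n => Real.sin (Real.sqrt (π ^ 2 + (v n : ℝ)))) atTop (𝓝 y))) := by
  have hπ : (0:ℝ) < π := Real.pi_pos
  refine ⟨?_, ?_, ?_, fun k => Real.abs_sin_le_one _, ?_⟩
  · -- integral
    intro k
    have hpos : ∀ s ∈ Set.uIcc (k:ℝ) (k+1:ℝ), 0 < π ^ 2 + s := by
      intro s hs
      rcases Set.mem_uIcc.1 hs with ⟨h1, _⟩ | ⟨h1, _⟩ <;> nlinarith [Nat.cast_nonneg (α := ℝ) k]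
    have hderiv : ∀ s ∈ Set.uIcc (k:ℝ) (k+1:ℝ),
        HasDerivAt (fun s => Real.sin (Real.sqrt (π ^ 2 + s)))
          (Real.cos (Real.sqrt (π ^ 2 + s)) / (2 * Real.sqrt (π ^ 2 + s))) s := by
      intro s hs
      have h0 := hpos s hs
      have h1 : HasDerivAt (fun s : ℝ => π ^ 2 + s) 1 s := by
        simpa using (hasDerivAt_id s).const_add (π ^ 2)
      have h2 : HasDerivAt (fun s : ℝ => Real.sqrt (π ^ 2 + s))
          (1 / (2 * Real.sqrt (π ^ 2 + s)) * 1) s :=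
        (Real.hasDerivAt_sqrt (ne_of_gt h0)).comp s h1
      have h3 := (Real.hasDerivAt_sin (Real.sqrt (π ^ 2 + s))).comp s h2
      refine h3.congr_deriv ?_
      ring
    have hint : IntervalIntegrable
        (fun s => Real.cos (Real.sqrt (π ^ 2 + s)) / (2 * Real.sqrt (π ^ 2 + s)))
        MeasureTheory.volume (k : ℝ) (k + 1 : ℝ) := by
      apply ContinuousOn.intervalIntegrable
      apply ContinuousOn.div
      · exact (Real.continuous_cos.comp (Real.continuous_sqrt.comp
          (continuous_const.add continuous_id))).continuousOn
      · exact (continuous_const.mul (Real.continuous_sqrt.comp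
          (continuous_const.add continuous_id))).continuousOn
      · intro s hs
        have h4 := hpos s hs
        have : 0 < Real.sqrt (π ^ 2 + s) := Real.sqrt_pos.2 h4
        positivity
    rw [intervalIntegral.integral_eq_sub_of_hasDerivAt hderiv hint, hA k]
  · -- tendsto A 0
    apply squeeze_zero_norm (a := fun k : ℕ => 1 / Real.sqrt (π ^ 2 + (k:ℝ)))
    · intro k
      rw [Real.norm_eq_abs, hA k]
      have h1 : |Real.sin (Real.sqrt (π ^ 2 + (k + 1 : ℝ))) - Real.sin (Real.sqrt (π ^ 2 + (k : ℝ)))|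
          ≤ |Real.sqrt (π ^ 2 + (k + 1 : ℝ)) - Real.sqrt (π ^ 2 + (k : ℝ))| := sin_lip _ _
      have hy : (0:ℝ) < π ^ 2 + k := by positivity
      have hy1 : (0:ℝ) < π ^ 2 + (k + 1 : ℝ) := by positivity
      have ha := Real.sq_sqrt hy.le
      have hb := Real.sq_sqrt hy1.le
      have hs : Real.sqrt (π ^ 2 + (k:ℝ)) ≤ Real.sqrt (π ^ 2 + (k + 1 : ℝ)) :=
        Real.sqrt_le_sqrt (by linarith)
      have hspos : 0 < Real.sqrt (π ^ 2 + (k:ℝ)) := Real.sqrt_pos.2 hy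
      have h2 : Real.sqrt (π ^ 2 + (k + 1 : ℝ)) - Real.sqrt (π ^ 2 + (k : ℝ))
          ≤ 1 / Real.sqrt (π ^ 2 + (k:ℝ)) := by
        rw [le_div_iff₀ hspos]
        nlinarith
      calc |Real.sin (Real.sqrt (π ^ 2 + (k + 1 : ℝ))) - Real.sin (Real.sqrt (π ^ 2 + (k : ℝ)))|
          ≤ |Real.sqrt (π ^ 2 + (k + 1 : ℝ)) - Real.sqrt (π ^ 2 + (k : ℝ))| := h1
        _ = Real.sqrt (π ^ 2 + (k + 1 : ℝ)) - Real.sqrt (π ^ 2 + (k : ℝ)) :=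
            abs_of_nonneg (by linarith)
        _ ≤ 1 / Real.sqrt (π ^ 2 + (k:ℝ)) := h2
    · simp only [one_div]
      exact (sqrt_tendsto.comp
        (tendsto_atTop_add_const_left _ _ tendsto_natCast_atTop_atTop)).inv_tendsto_atTop
  · -- telescoping
    intro k
    induction k with
    | zero =>
      simp only [Finset.range_zero, Finset.sum_empty, Nat.cast_zero, add_zero]
      rw [Real.sqrt_sq hπ.le, Real.sin_pi]
    | succ n ih =>
      rw [Finset.sum_range_succ, ih, hA n]
      push_cast
      ring_nf
  · -- two limit points
    obtain ⟨u, hu1, hu2⟩ := key_sub (π / 2) (by positivity)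
    obtain ⟨v, hv1, hv2⟩ := key_sub (3 * π / 2) (by positivity)
    refine ⟨Real.sin (π / 2), Real.sin (3 * π / 2), ?_, ⟨u, hu1, hu2⟩, ⟨v, hv1, hv2⟩⟩
    rw [Real.sin_pi_div_two]
    have h32 : Real.sin (3 * π / 2) = -1 := by
      have heq : (3:ℝ) * π / 2 = π + π / 2 := by ring
      rw [heq, Real.sin_add, Real.sin_pi, Real.cos_pi, Real.sin_pi_div_two]
      ring
    rw [h32]; norm_num
end
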